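/- arXiv:2403.07431 — 2 statements merged into one kernel-verified Lean document; each statement's English description precedes it below -/
import Mathlib

section
/- Let P_k* and P_0^s be orthogonal projections of ranks r_k and r_s respectively with r_s ≤ r_k, and suppose P_k* = P_k^s + P_k^p where P_k^s, P_k^p are orthogonal projections with P_k^s P_k^p = 0 and ‖P_k^s - P_0^s‖_F ≤ h. Then the quantity d_k := r_s - tr(P_k* P_0^s) satisfies 0 ≤ d_k ≤ h²/2 + h·√(2 r_s). -/
open Matrix BigOperators

noncomputable def frob {m n : ℕ} (A : Matrix (Fin m) (Fin n) ℝ) : ℝ :=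
  Real.sqrt (∑ i, ∑ j, (A i j)^2)

noncomputable def opNorm {p : ℕ} (A : Matrix (Fin p) (Fin p) ℝ) : ℝ :=
  ‖Matrix.toEuclideanCLM (𝕜 := ℝ) A‖

/-!
The trace of a projection is its rank, and `tr (P Q) = tr ((P Q)ᴴ (P Q)) ≥ 0` for projections
`P`, `Q`. Since `P_k* = P_k^s + P_k^p` is a projection, so is `1 - P_k*`, which gives
`d_k = tr ((1 - P_k*) P_0^s) ≥ 0`. For the upper bound, drop the nonnegative term
`tr (P_k^p P_0^s)` and use `‖P_k^s - P_0^s‖_F² = 2 r_s - 2 tr (P_k^s P_0^s)`, so that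
`d_k ≤ h² / 2`.
-/

namespace Matrix

variable {n : Type*} [Fintype n]

theorem trace_eq_rank_of_isIdempotentElem [DecidableEq n] {K : Type*} [Field K]
    {A : Matrix n n K} (hA : IsIdempotentElem A) : A.trace = A.rank := by
  have hlin : IsIdempotentElem (toLin' A) := hA.map (toLinAlgEquiv' (R := K) (n := n))
  rw [← trace_toLin'_eq, ((LinearMap.isProj_range_iff_isIdempotentElem _).mpr hlin).trace]
  rfl

theorem trace_mul_nonneg_of_isStarProjection {R : Type*} [CommRing R] [PartialOrder R]
    [StarRing R] [StarOrderedRing R] {P Q : Matrix n n R}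
    (hP : IsStarProjection P) (hQ : IsStarProjection Q) : 0 ≤ (P * Q).trace := by
  have h : (P * Q).trace = ((P * Q)ᴴ * (P * Q)).trace := by
    rw [conjTranspose_mul, ← star_eq_conjTranspose, ← star_eq_conjTranspose,
      hP.isSelfAdjoint.star_eq, hQ.isSelfAdjoint.star_eq, mul_assoc, ← mul_assoc P,
      hP.isIdempotentElem.eq, trace_mul_comm Q, mul_assoc, hQ.isIdempotentElem.eq]
  exact h ▸ (posSemidef_conjTranspose_mul_self _).trace_nonneg

theorem trace_conjTranspose_sub_mul_sub_of_isStarProjection {R : Type*} [CommRing R]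
    [StarRing R] {P Q : Matrix n n R} (hP : IsStarProjection P) (hQ : IsStarProjection Q) :
    ((P - Q)ᴴ * (P - Q)).trace = P.trace + Q.trace - 2 * (P * Q).trace := by
  rw [← star_eq_conjTranspose, (hP.isSelfAdjoint.sub hQ.isSelfAdjoint).star_eq, sub_mul,
    mul_sub, mul_sub, hP.isIdempotentElem.eq, hQ.isIdempotentElem.eq]
  simp only [trace_sub, trace_mul_comm Q P]
  ring

theorem IsSymm.isStarProjection {A : Matrix n n ℝ} (hA : A.IsSymm) (hAA : A * A = A) :
    IsStarProjection A :=
  ⟨hAA, (isHermitian_iff_isSymm.mpr hA).isSelfAdjoint⟩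

end Matrix

theorem frob_sq_eq_trace {m n : ℕ} (A : Matrix (Fin m) (Fin n) ℝ) :
    frob A ^ 2 = (Aᴴ * A).trace := by
  rw [frob, Real.sq_sqrt (by positivity)]
  simp only [trace, diag, mul_apply, conjTranspose_apply, star_trivial, sq]
  exact Finset.sum_comm

theorem stmt6_general {p : ℕ} (rs : ℕ) (h : ℝ)
    (Pkstar Pks Pkp P0s : Matrix (Fin p) (Fin p) ℝ)
    (hPks : Pks.IsSymm) (hPksIdem : Pks * Pks = Pks) (hPksRank : Pks.rank = rs)
    (hPkp : Pkp.IsSymm) (hPkpIdem : Pkp * Pkp = Pkp)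
    (hP0s : P0s.IsSymm) (hP0sIdem : P0s * P0s = P0s) (hP0sRank : P0s.rank = rs)
    (hdecomp : Pkstar = Pks + Pkp) (hOrth : Pks * Pkp = 0)
    (hclose : frob (Pks - P0s) ≤ h) :
    0 ≤ (rs : ℝ) - (Pkstar * P0s).trace ∧
    (rs : ℝ) - (Pkstar * P0s).trace ≤ h^2 / 2 + h * Real.sqrt (2 * rs) := by
  have hS := hPks.isStarProjection hPksIdem
  have hP := hPkp.isStarProjection hPkpIdem
  have h0 := hP0s.isStarProjection hP0sIdem
  have htrS : Pks.trace = rs := hPksRank ▸ trace_eq_rank_of_isIdempotentElem hS.isIdempotentElem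
  have htr0 : P0s.trace = rs := hP0sRank ▸ trace_eq_rank_of_isIdempotentElem h0.isIdempotentElem
  have hcompl : 0 ≤ ((1 - Pkstar) * P0s).trace :=
    trace_mul_nonneg_of_isStarProjection (hdecomp ▸ hS.add hP hOrth).one_sub h0
  have hPkp0 : 0 ≤ (Pkp * P0s).trace := trace_mul_nonneg_of_isStarProjection hP h0
  have hfrob : frob (Pks - P0s) ^ 2 = 2 * rs - 2 * (Pks * P0s).trace := by
    rw [frob_sq_eq_trace, trace_conjTranspose_sub_mul_sub_of_isStarProjection hS h0, htrS, htr0]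
    ring
  have hfrob_le : frob (Pks - P0s) ^ 2 ≤ h ^ 2 :=
    pow_le_pow_left₀ (Real.sqrt_nonneg _) hclose 2
  have hh : 0 ≤ h * Real.sqrt (2 * rs) :=
    mul_nonneg ((Real.sqrt_nonneg _).trans hclose) (Real.sqrt_nonneg _)
  rw [sub_mul, one_mul, trace_sub, htr0] at hcompl
  rw [hdecomp, add_mul, trace_add] at hcompl ⊢
  constructor <;> linarith

/-- Informative level bound: with P_k* = P_k^s + P_k^p, P_k^s P_k^p = 0 and
‖P_k^s - P_0^s‖_F ≤ h, the quantity d_k = r_s - tr(P_k* P_0^s) satisfies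
0 ≤ d_k ≤ h²/2 + h√(2 r_s). -/
theorem stmt6 {p : ℕ} (rs rk : ℕ) (h : ℝ) (hh : 0 ≤ h)
    (Pkstar Pks Pkp P0s : Matrix (Fin p) (Fin p) ℝ)
    (hPks : Pks.IsSymm) (hPksIdem : Pks * Pks = Pks) (hPksRank : Pks.rank = rs)
    (hPkp : Pkp.IsSymm) (hPkpIdem : Pkp * Pkp = Pkp) (hPkpRank : Pkp.rank = rk - rs)
    (hP0s : P0s.IsSymm) (hP0sIdem : P0s * P0s = P0s) (hP0sRank : P0s.rank = rs)
    (hdecomp : Pkstar = Pks + Pkp) (hOrth : Pks * Pkp = 0)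
    (hrs : rs ≤ rk)
    (hclose : frob (Pks - P0s) ≤ h) :
    0 ≤ (rs : ℝ) - (Pkstar * P0s).trace ∧
    (rs : ℝ) - (Pkstar * P0s).trace ≤ h^2 / 2 + h * Real.sqrt (2 * rs) :=
  stmt6_general rs h Pkstar Pks Pkp P0s hPks hPksIdem hPksRank hPkp hPkpIdem hP0s hP0sIdem hP0sRank
    hdecomp hOrth hclose
end

section
/- Let z be a random vector in R^p with i.i.d. mean-zero unit-variance coordinates having fourth moment ν_4, and let γ_i = A^T u_i for vectors u_i and a matrix A with Σ = A A^T, where ⟨γ_i, γ_j⟩ = λ_i δ_{ij} (Kronecker delta) for indices i in a set S and j in S^c. Define L = Σ_{i∈S} Σ_{j∈S^c} (ρ_{ij}/(λ_i - λ_j)) · ⟨γ_i, z⟩⟨γ_j, z⟩ for real coefficients ρ_{ij}. Then E[L] = 0 and E[L²] = Σ_{i∈S} Σ_{j∈S^c} ρ_{ij}² λ_i λ_j/(λ_i - λ_j)² + (ν_4 - 3) Σ_{m=1}^p ( Σ_{i∈S} Σ_{j∈S^c} ρ_{ij} γ_{im} γ_{jm}/(λ_i - λ_j) )². -/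
open Matrix BigOperators

open MeasureTheory ProbabilityTheory
open Finset

/-!
Let `Γ` be the matrix with rows `γ i` and `C` the matrix with entries `ρ i j / (lam i - lam j)`
on `S × Sᶜ` and `0` elsewhere. Then `L = zᵀ B z` with `B = Γᵀ C Γ`. For independent coordinates
with mean `0`, variance `1` and fourth moment `ν4`,
`E[z_a z_b z_c z_d] = δ_ab δ_cd + δ_ac δ_bd + δ_ad δ_bc + (ν4 - 3) δ_abcd`, hence
`E[zᵀ B z] = tr B` and `E[(zᵀ B z)²] = (tr B)² + tr (B Bᵀ) + tr (B²) + (ν4 - 3) ∑ₘ B_mm²`.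
Since `Γ Γᵀ = diag lam`, the traces reduce to `tr B = ∑ C_ii lam_i`,
`tr (B Bᵀ) = ∑ C_ij² lam_i lam_j` and `tr (B²) = ∑ C_ij C_ji lam_i lam_j`; the support of `C`
kills the first and the last.
-/

def fourthMomentTensor {ι : Type*} [DecidableEq ι] (ν4 : ℝ) (a b c d : ι) : ℝ :=
  (if a = b then 1 else 0) * (if c = d then 1 else 0)
    + (if a = c then 1 else 0) * (if b = d then 1 else 0)
    + (if a = d then 1 else 0) * (if b = c then 1 else 0)
    + (ν4 - 3) * (if a = b ∧ a = c ∧ a = d then 1 else 0)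

section Count

variable {ι M : Type*} [Fintype ι] [DecidableEq ι] [CommMonoid M]

lemma prod_apply_count_eq_prod_toFinset (G : ι → ℕ → M) (h0 : ∀ m, G m 0 = 1)
    (s : Multiset ι) :
    ∏ m, G m (s.count m) = ∏ m ∈ s.toFinset, G m (s.count m) :=
  (prod_subset (subset_univ _) fun m _ hm => by
    rw [Multiset.count_eq_zero_of_notMem (by simpa using hm), h0]).symm

lemma Multiset.prod_map_eq_prod_pow_count (s : Multiset ι) (f : ι → M) :
    (s.map f).prod = ∏ m, f m ^ s.count m := by
  rw [Finset.prod_multiset_map_count,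
    prod_apply_count_eq_prod_toFinset (fun m k => f m ^ k) (fun _ => pow_zero _)]

end Count

section Combinatorics

variable {ι : Type*} [Fintype ι] [DecidableEq ι] (G : ι → ℕ → ℝ)

lemma prod_apply_count_pair (h0 : ∀ m, G m 0 = 1) (h1 : ∀ m, G m 1 = 0) (h2 : ∀ m, G m 2 = 1)
    (a b : ι) :
    ∏ m, G m (({a, b} : Multiset ι).count m) = if a = b then 1 else 0 := by
  rw [prod_apply_count_eq_prod_toFinset G h0]
  by_cases hab : a = b <;> simp_all [Multiset.count_cons, Ne.symm]

lemma prod_apply_count_quadruple {ν4 : ℝ} (h0 : ∀ m, G m 0 = 1) (h1 : ∀ m, G m 1 = 0)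
    (h2 : ∀ m, G m 2 = 1) (h4 : ∀ m, G m 4 = ν4) (a b c d : ι) :
    ∏ m, G m (({a, b, c, d} : Multiset ι).count m) = fourthMomentTensor ν4 a b c d := by
  rw [prod_apply_count_eq_prod_toFinset G h0, fourthMomentTensor]
  by_cases hab : a = b <;> by_cases hac : a = c <;> by_cases had : a = d <;>
    by_cases hbc : b = c <;> by_cases hbd : b = d <;> by_cases hcd : c = d <;>
    simp_all [Multiset.count_cons, Ne.symm, show (1 : ℝ) + 1 + 1 + (ν4 - 3) = ν4 by ring]

end Combinatorics

section Moments

variable {ι Ω : Type*} [Fintype ι] [DecidableEq ι] [MeasurableSpace Ω] {μ : Measure Ω}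
  {z : ι → Ω → ℝ}

lemma ProbabilityTheory.iIndepFun.integral_multiset_prod (hindep : iIndepFun z μ)
    (hmeas : ∀ m, Measurable (z m)) (s : Multiset ι) :
    ∫ ω, (s.map (z · ω)).prod ∂μ = ∏ m, ∫ ω, z m ω ^ s.count m ∂μ := by
  simp_rw [Multiset.prod_map_eq_prod_pow_count]
  exact hindep.integral_fun_prod_comp (fun m => (hmeas m).aemeasurable)
    (fun _ => (continuous_pow _).aestronglyMeasurable)

lemma ProbabilityTheory.iIndepFun.integral_mul_eq_ite (hindep : iIndepFun z μ)
    (hmeas : ∀ m, Measurable (z m)) (hmean : ∀ m, ∫ ω, z m ω ∂μ = 0)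
    (hvar : ∀ m, ∫ ω, z m ω ^ 2 ∂μ = 1) (a b : ι) :
    ∫ ω, z a ω * z b ω ∂μ = if a = b then 1 else 0 := by
  have := hindep.isProbabilityMeasure
  have h := hindep.integral_multiset_prod hmeas {a, b}
  simp only [Multiset.insert_eq_cons, Multiset.map_cons, Multiset.prod_cons,
    Multiset.map_singleton, Multiset.prod_singleton] at h
  rw [h]
  exact prod_apply_count_pair (fun m k => ∫ ω, z m ω ^ k ∂μ) (fun _ => by simp)
    (fun m => by simpa using hmean m) hvar a b

lemma ProbabilityTheory.iIndepFun.integral_mul_mul_mul_eq (hindep : iIndepFun z μ)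
    (hmeas : ∀ m, Measurable (z m)) (hmean : ∀ m, ∫ ω, z m ω ∂μ = 0)
    (hvar : ∀ m, ∫ ω, z m ω ^ 2 ∂μ = 1) {ν4 : ℝ} (hmom4 : ∀ m, ∫ ω, z m ω ^ 4 ∂μ = ν4)
    (a b c d : ι) :
    ∫ ω, z a ω * z b ω * z c ω * z d ω ∂μ = fourthMomentTensor ν4 a b c d := by
  have := hindep.isProbabilityMeasure
  have h := hindep.integral_multiset_prod hmeas {a, b, c, d}
  simp only [Multiset.insert_eq_cons, Multiset.map_cons, Multiset.prod_cons,
    Multiset.map_singleton, Multiset.prod_singleton, ← mul_assoc] at h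
  rw [h]
  exact prod_apply_count_quadruple (fun m k => ∫ ω, z m ω ^ k ∂μ) (fun _ => by simp)
    (fun m => by simpa using hmean m) hvar hmom4 a b c d

end Moments

lemma abs_mul_le_one_add_pow_four (a b : ℝ) : |a * b| ≤ 1 + a ^ 4 + b ^ 4 := by
  rw [abs_le]
  constructor <;>
  nlinarith [sq_nonneg (a + b), sq_nonneg (a - b), sq_nonneg (a ^ 2 - 1), sq_nonneg (b ^ 2 - 1)]

lemma abs_mul_mul_mul_le_sum_pow_four (a b c d : ℝ) :
    |a * b * c * d| ≤ a ^ 4 + b ^ 4 + c ^ 4 + d ^ 4 := by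
  rw [abs_le]
  constructor <;>
  nlinarith [sq_nonneg (a * b + c * d), sq_nonneg (a * b - c * d), sq_nonneg (a ^ 2 - b ^ 2),
    sq_nonneg (c ^ 2 - d ^ 2)]

section Integrability

variable {ι Ω : Type*} [MeasurableSpace Ω] {μ : Measure Ω} {z : ι → Ω → ℝ}

lemma integrable_mul_of_integrable_pow_four [IsFiniteMeasure μ] (hmeas : ∀ m, Measurable (z m))
    (hint : ∀ m, Integrable (fun ω => z m ω ^ 4) μ) (a b : ι) :
    Integrable (fun ω => z a ω * z b ω) μ :=
  (((integrable_const 1).add (hint a)).add (hint b)).mono'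
    ((hmeas a).mul (hmeas b)).aestronglyMeasurable
    (ae_of_all _ fun _ => abs_mul_le_one_add_pow_four _ _)

lemma integrable_mul_mul_mul_of_integrable_pow_four (hmeas : ∀ m, Measurable (z m))
    (hint : ∀ m, Integrable (fun ω => z m ω ^ 4) μ) (a b c d : ι) :
    Integrable (fun ω => z a ω * z b ω * z c ω * z d ω) μ :=
  ((((hint a).add (hint b)).add (hint c)).add (hint d)).mono'
    ((((hmeas a).mul (hmeas b)).mul (hmeas c)).mul (hmeas d)).aestronglyMeasurable
    (ae_of_all _ fun _ => abs_mul_mul_mul_le_sum_pow_four _ _ _ _)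

end Integrability

lemma Matrix.dotProduct_mulVec_self_eq_sum {ι R : Type*} [Fintype ι] [CommSemiring R]
    (B : Matrix ι ι R) (x : ι → R) :
    x ⬝ᵥ B *ᵥ x = ∑ m, ∑ n, B m n * (x m * x n) := by
  simp only [dotProduct, mulVec, Finset.mul_sum]
  exact sum_congr rfl fun m _ => sum_congr rfl fun n _ => by ring

lemma Matrix.sum_mul_mul_fourthMomentTensor {ι : Type*} [Fintype ι] [DecidableEq ι]
    (B : Matrix ι ι ℝ) (ν4 : ℝ) :
    ∑ a, ∑ b, ∑ c, ∑ d, B a b * B c d * fourthMomentTensor ν4 a b c d =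
      trace B ^ 2 + trace (B * Bᵀ) + trace (B * B) + (ν4 - 3) * ∑ m, B m m ^ 2 := by
  simp only [fourthMomentTensor, mul_add, sum_add_distrib, mul_ite, mul_one, mul_zero, ite_and,
    sum_ite_eq, mem_univ, if_true, ← sum_mul, ← mul_sum, sum_ite_irrel, sum_const_zero]
  simp only [trace, Matrix.diag, mul_apply, transpose_apply, sq, mul_sum, sum_mul]
  rw [sum_congr rfl fun i _ => mul_comm (ν4 - 3) (B i i * B i i)]

section QuadraticForm

variable {ι Ω : Type*} [Fintype ι] [DecidableEq ι] [MeasurableSpace Ω] {μ : Measure Ω}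
  {z : ι → Ω → ℝ}

lemma ProbabilityTheory.iIndepFun.integral_quadForm (hindep : iIndepFun z μ)
    (hmeas : ∀ m, Measurable (z m)) (hint : ∀ m, Integrable (fun ω => z m ω ^ 4) μ)
    (hmean : ∀ m, ∫ ω, z m ω ∂μ = 0) (hvar : ∀ m, ∫ ω, z m ω ^ 2 ∂μ = 1) (B : Matrix ι ι ℝ) :
    ∫ ω, (fun m => z m ω) ⬝ᵥ B *ᵥ (fun m => z m ω) ∂μ = trace B := by
  have := hindep.isProbabilityMeasure
  have hterm : ∀ a b, Integrable (fun ω => B a b * (z a ω * z b ω)) μ := fun a b =>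
    (integrable_mul_of_integrable_pow_four hmeas hint a b).const_mul _
  simp only [dotProduct_mulVec_self_eq_sum]
  simp (disch := intros; fun_prop (disch := exact hterm ..)) only [integral_finsetSum]
  simp only [integral_const_mul, hindep.integral_mul_eq_ite hmeas hmean hvar, mul_ite, mul_one,
    mul_zero, sum_ite_eq, mem_univ, if_true, trace, Matrix.diag]

lemma ProbabilityTheory.iIndepFun.integral_quadForm_sq (hindep : iIndepFun z μ)
    (hmeas : ∀ m, Measurable (z m)) (hint : ∀ m, Integrable (fun ω => z m ω ^ 4) μ)
    (hmean : ∀ m, ∫ ω, z m ω ∂μ = 0) (hvar : ∀ m, ∫ ω, z m ω ^ 2 ∂μ = 1)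
    {ν4 : ℝ} (hmom4 : ∀ m, ∫ ω, z m ω ^ 4 ∂μ = ν4) (B : Matrix ι ι ℝ) :
    ∫ ω, ((fun m => z m ω) ⬝ᵥ B *ᵥ (fun m => z m ω)) ^ 2 ∂μ =
      trace B ^ 2 + trace (B * Bᵀ) + trace (B * B) + (ν4 - 3) * ∑ m, B m m ^ 2 := by
  have hexpand : ∀ ω, ((fun m => z m ω) ⬝ᵥ B *ᵥ (fun m => z m ω)) ^ 2 =
      ∑ a, ∑ b, ∑ c, ∑ d, B a b * B c d * (z a ω * z b ω * z c ω * z d ω) := by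
    intro ω
    simp only [dotProduct_mulVec_self_eq_sum, sq, sum_mul, mul_sum]
    exact sum_congr rfl fun _ _ => sum_congr rfl fun _ _ => sum_congr rfl fun _ _ =>
      sum_congr rfl fun _ _ => by ring
  have hterm : ∀ a b c d, Integrable
      (fun ω => B a b * B c d * (z a ω * z b ω * z c ω * z d ω)) μ := fun a b c d =>
    (integrable_mul_mul_mul_of_integrable_pow_four hmeas hint a b c d).const_mul _
  simp only [hexpand]
  simp (disch := intros; fun_prop (disch := exact hterm ..)) only [integral_finsetSum]
  simp only [integral_const_mul, hindep.integral_mul_mul_mul_eq hmeas hmean hvar hmom4]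
  exact sum_mul_mul_fourthMomentTensor B ν4

end QuadraticForm

section Congruence

variable {ι κ R : Type*} [Fintype κ] [CommSemiring R]

lemma Matrix.transpose_mul_mul_apply (G : Matrix κ ι R) (C : Matrix κ κ R) (m n : ι) :
    (Gᵀ * C * G) m n = ∑ i, ∑ j, C i j * (G i m * G j n) := by
  simp only [mul_apply, transpose_apply, sum_mul]
  rw [sum_comm]
  exact sum_congr rfl fun i _ => sum_congr rfl fun j _ => by ring

variable [Fintype ι]

lemma Matrix.dotProduct_transpose_mul_mul_mulVec (G : Matrix κ ι R) (C : Matrix κ κ R)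
    (x : ι → R) :
    x ⬝ᵥ (Gᵀ * C * G) *ᵥ x = (G *ᵥ x) ⬝ᵥ C *ᵥ (G *ᵥ x) := by
  rw [← mulVec_mulVec, ← mulVec_mulVec, dotProduct_mulVec, vecMul_transpose]

variable [DecidableEq κ] {G : Matrix κ ι R} {d : κ → R}

lemma Matrix.trace_transpose_mul_mul_of_mul_transpose_eq_diagonal
    (hG : G * Gᵀ = diagonal d) (C : Matrix κ κ R) :
    trace (Gᵀ * C * G) = ∑ i, C i i * d i := by
  rw [Matrix.mul_assoc, trace_mul_comm, Matrix.mul_assoc, hG]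
  simp [trace, mul_diagonal]

lemma Matrix.trace_transpose_mul_mul_mul_of_mul_transpose_eq_diagonal
    (hG : G * Gᵀ = diagonal d) (C E : Matrix κ κ R) :
    trace (Gᵀ * C * G * (Gᵀ * E * G)) = ∑ i, ∑ j, C i j * E j i * d i * d j := by
  rw [show Gᵀ * C * G * (Gᵀ * E * G) = Gᵀ * (C * (G * Gᵀ) * E * G) by
    simp only [Matrix.mul_assoc], trace_mul_comm, hG, Matrix.mul_assoc _ G, hG]
  simp only [trace, Matrix.diag, mul_diagonal]
  simp only [mul_apply, diagonal_apply, mul_ite, mul_zero, sum_ite_eq', mem_univ, if_true, sum_mul]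
  exact sum_congr rfl fun i _ => sum_congr rfl fun j _ => by ring

end Congruence

def crossBlock {κ R : Type*} [DecidableEq κ] [Zero R] (S : Finset κ) (c : κ → κ → R) :
    Matrix κ κ R :=
  of fun i j => if i ∈ S ∧ j ∉ S then c i j else 0

section CrossBlock

variable {κ R : Type*} [DecidableEq κ] [Semiring R] (S : Finset κ) (c : κ → κ → R)

lemma crossBlock_apply_self (i : κ) : crossBlock S c i i = 0 := by
  simp [crossBlock]

lemma crossBlock_apply_of_mem {i j : κ} (hi : i ∈ S) (hj : j ∉ S) :
    crossBlock S c i j = c i j := by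
  simp_all [crossBlock]

lemma crossBlock_mul_crossBlock_swap (i j : κ) :
    crossBlock S c i j * crossBlock S c j i = 0 := by
  by_cases hi : i ∈ S <;> simp [crossBlock, hi]

lemma sum_sum_crossBlock_mul [Fintype κ] (F : κ → κ → R) :
    ∑ i, ∑ j, crossBlock S c i j * F i j = ∑ i ∈ S, ∑ j ∈ Sᶜ, c i j * F i j := by
  simp [crossBlock, ite_and, sum_ite_mem, ← mem_compl]

end CrossBlock

section CongruenceCrossBlock

variable {ι κ R : Type*} [Fintype κ] [DecidableEq κ] [CommSemiring R]
  (S : Finset κ) (c : κ → κ → R) (G : Matrix κ ι R)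

lemma transpose_mul_crossBlock_mul_apply (m n : ι) :
    (Gᵀ * crossBlock S c * G) m n = ∑ i ∈ S, ∑ j ∈ Sᶜ, c i j * (G i m * G j n) := by
  rw [transpose_mul_mul_apply, sum_sum_crossBlock_mul]

variable [Fintype ι]

lemma dotProduct_transpose_mul_crossBlock_mul_mulVec (x : ι → R) :
    x ⬝ᵥ (Gᵀ * crossBlock S c * G) *ᵥ x =
      ∑ i ∈ S, ∑ j ∈ Sᶜ, c i j * ((G *ᵥ x) i * (G *ᵥ x) j) := by
  rw [dotProduct_transpose_mul_mul_mulVec, dotProduct_mulVec_self_eq_sum, sum_sum_crossBlock_mul]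

variable {G} {d : κ → R}

lemma trace_transpose_mul_crossBlock_mul (hG : G * Gᵀ = diagonal d) :
    trace (Gᵀ * crossBlock S c * G) = 0 := by
  simp [trace_transpose_mul_mul_of_mul_transpose_eq_diagonal hG, crossBlock_apply_self]

lemma trace_transpose_mul_crossBlock_mul_sq (hG : G * Gᵀ = diagonal d) :
    trace (Gᵀ * crossBlock S c * G * (Gᵀ * crossBlock S c * G)) = 0 := by
  simp [trace_transpose_mul_mul_mul_of_mul_transpose_eq_diagonal hG,
    crossBlock_mul_crossBlock_swap]

lemma trace_transpose_mul_crossBlock_mul_mul_transpose (hG : G * Gᵀ = diagonal d) :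
    trace (Gᵀ * crossBlock S c * G * (Gᵀ * crossBlock S c * G)ᵀ) =
      ∑ i ∈ S, ∑ j ∈ Sᶜ, c i j ^ 2 * d i * d j := by
  rw [show (Gᵀ * crossBlock S c * G)ᵀ = Gᵀ * (crossBlock S c)ᵀ * G by
      simp [Matrix.mul_assoc],
    trace_transpose_mul_mul_mul_of_mul_transpose_eq_diagonal hG]
  simp only [transpose_apply, mul_assoc, sum_sum_crossBlock_mul]
  refine sum_congr rfl fun i hi => sum_congr rfl fun j hj => ?_
  rw [crossBlock_apply_of_mem S c hi (mem_compl.1 hj)]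
  ring

end CongruenceCrossBlock

theorem stmt11_general {p : ℕ} {Ω : Type} [MeasurableSpace Ω]
    (μ : Measure Ω)
    (z : Fin p → Ω → ℝ) (hmeas : ∀ m, Measurable (z m))
    (hindep : iIndepFun z μ)
    (hint : ∀ m, Integrable (fun ω => (z m ω)^4) μ)
    (hmean : ∀ m, ∫ ω, z m ω ∂μ = 0)
    (hvar : ∀ m, ∫ ω, (z m ω)^2 ∂μ = 1)
    (ν4 : ℝ) (hmom4 : ∀ m, ∫ ω, (z m ω)^4 ∂μ = ν4)
    (S : Finset (Fin p)) (lam : Fin p → ℝ) (γ : Fin p → Fin p → ℝ)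
    (ρ : Fin p → Fin p → ℝ)
    (horth : ∀ i j, (γ i) ⬝ᵥ (γ j) = if i = j then lam i else 0)
    (L : Ω → ℝ)
    (hL : ∀ ω, L ω = ∑ i ∈ S, ∑ j ∈ Sᶜ,
      (ρ i j / (lam i - lam j)) * (((γ i) ⬝ᵥ fun m => z m ω) * ((γ j) ⬝ᵥ fun m => z m ω))) :
    (∫ ω, L ω ∂μ) = 0 ∧
    (∫ ω, (L ω)^2 ∂μ)
      = (∑ i ∈ S, ∑ j ∈ Sᶜ, (ρ i j)^2 * lam i * lam j / (lam i - lam j)^2)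
        + (ν4 - 3) * ∑ m : Fin p,
            (∑ i ∈ S, ∑ j ∈ Sᶜ, ρ i j * γ i m * γ j m / (lam i - lam j))^2 := by
  set G : Matrix (Fin p) (Fin p) ℝ := of γ
  set B := Gᵀ * crossBlock S (fun i j => ρ i j / (lam i - lam j)) * G
  have hG : G * Gᵀ = diagonal lam := by
    ext i j
    simpa [G, mul_apply, diagonal_apply, dotProduct] using horth i j
  have hLB : L = fun ω => (fun m => z m ω) ⬝ᵥ B *ᵥ fun m => z m ω := by
    ext ω
    rw [hL, dotProduct_transpose_mul_crossBlock_mul_mulVec]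
    rfl
  rw [hLB, hindep.integral_quadForm hmeas hint hmean hvar,
    hindep.integral_quadForm_sq hmeas hint hmean hvar hmom4,
    trace_transpose_mul_crossBlock_mul _ _ hG, trace_transpose_mul_crossBlock_mul_sq _ _ hG,
    trace_transpose_mul_crossBlock_mul_mul_transpose _ _ hG]
  simp only [B, transpose_mul_crossBlock_mul_apply, G, of_apply]
  simp [div_pow, div_mul_eq_mul_div, mul_assoc]

/-- Variance computation of Lemma S6: with ⟨γ_i, γ_j⟩ = λ_i δ_{ij} and
L = Σ_{i∈S} Σ_{j∈Sᶜ} (ρ_{ij}/(λ_i-λ_j)) ⟨γ_i,z⟩⟨γ_j,z⟩, one has E[L] = 0 and the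
stated formula for E[L²]. -/
theorem stmt11 {p : ℕ} {Ω : Type} [MeasurableSpace Ω]
    (μ : Measure Ω) [IsProbabilityMeasure μ]
    (z : Fin p → Ω → ℝ) (hmeas : ∀ m, Measurable (z m))
    (hindep : iIndepFun z μ)
    (hint : ∀ m, Integrable (fun ω => (z m ω)^4) μ)
    (hmean : ∀ m, ∫ ω, z m ω ∂μ = 0)
    (hvar : ∀ m, ∫ ω, (z m ω)^2 ∂μ = 1)
    (ν4 : ℝ) (hmom4 : ∀ m, ∫ ω, (z m ω)^4 ∂μ = ν4)
    (S : Finset (Fin p)) (lam : Fin p → ℝ) (γ : Fin p → Fin p → ℝ)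
    (ρ : Fin p → Fin p → ℝ)
    (horth : ∀ i j, (γ i) ⬝ᵥ (γ j) = if i = j then lam i else 0)
    (hlt : ∀ i ∈ S, ∀ j ∈ Sᶜ, lam j < lam i)
    (L : Ω → ℝ)
    (hL : ∀ ω, L ω = ∑ i ∈ S, ∑ j ∈ Sᶜ,
      (ρ i j / (lam i - lam j)) * (((γ i) ⬝ᵥ fun m => z m ω) * ((γ j) ⬝ᵥ fun m => z m ω))) :
    (∫ ω, L ω ∂μ) = 0 ∧
    (∫ ω, (L ω)^2 ∂μ)
      = (∑ i ∈ S, ∑ j ∈ Sᶜ, (ρ i j)^2 * lam i * lam j / (lam i - lam j)^2)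
        + (ν4 - 3) * ∑ m : Fin p,
            (∑ i ∈ S, ∑ j ∈ Sᶜ, ρ i j * γ i m * γ j m / (lam i - lam j))^2 :=
  stmt11_general μ z hmeas hindep hint hmean hvar ν4 hmom4 S lam γ ρ horth L hL
end
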